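/- arXiv:1904.08001 — 4 statements merged into one kernel-verified Lean document; each statement's English description precedes it below -/
import Mathlib

section
/- Let ℓ be a prime number, n ≥ 1 an integer, and let G be a profinite group such that every open normal subgroup of G has finite index not divisible by ℓ (equivalently, every finite continuous quotient of G has order prime to ℓ). Then every continuous group homomorphism ρ : G → GL_n(ℚ_ℓ) has finite image; in particular, ρ factors through a finite quotient of G. -/
/-!
In an ultrametric normed algebra, `x ^ m - 1 = m • (x - 1) + O(‖x - 1‖ ^ 2)`, so if
`‖x - 1‖ < 1` and `‖m‖ = 1` then `‖x - 1‖ ≤ ‖x ^ m - 1‖`. Give matrices over `ℚ_[ℓ]` the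
entrywise sup norm, which is submultiplicative because `ℚ_[ℓ]` is ultrametric. By continuity an
open normal subgroup `N` of `G` maps into the ball `‖x - 1‖ < 1`. For `g ∈ N` and `ε > 0`, pick an
open normal subgroup `H` mapping into the `ε`-ball: its index `m` is prime to `ℓ`, so `‖m‖ = 1`,
and `g ^ m ∈ H` gives `‖ρ g - 1‖ ≤ ‖ρ (g ^ m) - 1‖ < ε`. Hence `ρ` is trivial on `N`, which has
finite index.
-/

namespace IsUltrametricDist

variable {R : Type*} [SeminormedRing R] [IsUltrametricDist R]

theorem norm_one_add_pow_sub_le {Z : R} (hZ : ‖Z‖ ≤ 1) (m : ℕ) :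
    ‖(1 + Z) ^ m - (1 + m • Z)‖ ≤ ‖Z‖ ^ 2 := by
  induction m with
  | zero => simp
  | succ m ih =>
    set E := (1 + Z) ^ m - (1 + m • Z)
    have hE : (1 + Z) ^ (m + 1) - (1 + (m + 1) • Z) = E + E * Z + m • (Z * Z) := by
      simp only [E, pow_succ, sub_mul, add_smul, one_smul, nsmul_eq_mul]
      noncomm_ring
    have hEZ : ‖E * Z‖ ≤ ‖Z‖ ^ 2 :=
      calc ‖E * Z‖ ≤ ‖E‖ * ‖Z‖ := norm_mul_le _ _
        _ ≤ ‖Z‖ ^ 2 * 1 := mul_le_mul ih hZ (norm_nonneg _) (by positivity)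
        _ = ‖Z‖ ^ 2 := mul_one _
    have hZZ : ‖m • (Z * Z)‖ ≤ ‖Z‖ ^ 2 :=
      (norm_nsmul_le _ _).trans (by rw [sq]; exact norm_mul_le _ _)
    rw [hE]
    exact (norm_add_le_max _ _).trans (max_le ((norm_add_le_max _ _).trans (max_le ih hEZ)) hZZ)

theorem norm_sub_one_le_norm_pow_sub_one {K : Type*} [NormedField K] [Module K R]
    [NormSMulClass K R] {x : R} (hx : ‖x - 1‖ < 1) {m : ℕ} (hm : ‖(m : K)‖ = 1) :
    ‖x - 1‖ ≤ ‖x ^ m - 1‖ := by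
  set Z := x - 1
  have hxZ : x = 1 + Z := by simp [Z]
  have hmZ : ‖m • Z‖ = ‖Z‖ := by rw [← Nat.cast_smul_eq_nsmul K, norm_smul, hm, one_mul]
  have hmax : ‖Z‖ ≤ max ‖x ^ m - 1‖ (‖Z‖ ^ 2) :=
    calc ‖Z‖ = ‖(x ^ m - 1) + -((1 + Z) ^ m - (1 + m • Z))‖ := by
          rw [← hmZ, hxZ]; congr 1; abel
      _ ≤ max ‖x ^ m - 1‖ (‖Z‖ ^ 2) := by
          refine (norm_add_le_max _ _).trans (max_le_max le_rfl ?_)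
          rw [norm_neg]
          exact norm_one_add_pow_sub_le hx.le m
  rcases le_max_iff.mp hmax with h | h
  · exact h
  · -- `‖Z‖ ≤ ‖Z‖ ^ 2` together with `‖Z‖ < 1` forces `Z = 0`
    nlinarith [norm_nonneg Z, norm_nonneg (x ^ m - 1)]

end IsUltrametricDist

namespace Matrix

open scoped Matrix.Norms.Elementwise

variable {l m n α : Type*} [Fintype l] [Fintype m] [Fintype n]

protected theorem isUltrametricDist [SeminormedAddCommGroup α] [IsUltrametricDist α] :
    IsUltrametricDist (Matrix m n α) :=
  Pi.instIsUltrametricDist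

theorem norm_mul_le_of_isUltrametricDist [SeminormedRing α] [IsUltrametricDist α]
    (A : Matrix l m α) (B : Matrix m n α) : ‖A * B‖ ≤ ‖A‖ * ‖B‖ := by
  refine (norm_le_iff (by positivity)).2 fun i j => ?_
  rw [mul_apply]
  refine IsUltrametricDist.norm_sum_le_of_forall_le_of_nonneg (by positivity) fun k _ => ?_
  exact (norm_mul_le _ _).trans (mul_le_mul (norm_entry_le_entrywise_sup_norm A)
    (norm_entry_le_entrywise_sup_norm B) (norm_nonneg _) (norm_nonneg _))

protected abbrev ultrametricNormedRing [NormedRing α] [IsUltrametricDist α] [DecidableEq n] :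
    NormedRing (Matrix n n α) :=
  { Matrix.normedAddCommGroup, Matrix.instRing with
    norm_mul_le := norm_mul_le_of_isUltrametricDist }

end Matrix

theorem ProfiniteGrp.exists_openNormalSubgroup_norm_sub_one_lt {G R : Type*} [Group G]
    [TopologicalSpace G] [IsTopologicalGroup G] [CompactSpace G] [TotallyDisconnectedSpace G]
    [SeminormedRing R] (ρ : G →* Rˣ) (hρ : Continuous ρ) {ε : ℝ} (hε : 0 < ε) :
    ∃ H : OpenNormalSubgroup G, ∀ g ∈ H, ‖(ρ g : R) - 1‖ < ε := by
  have hopen : IsOpen {g : G | ‖(ρ g : R) - 1‖ < ε} :=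
    isOpen_lt (by fun_prop) continuous_const
  exact ProfiniteGrp.exist_openNormalSubgroup_sub_open_nhds_of_one hopen
    (show ‖((ρ 1 : Rˣ) : R) - 1‖ < ε by simpa using hε)

theorem MonoidHom.finite_range_of_le_ker {G M : Type*} [Group G] [Group M] (f : G →* M)
    {N : Subgroup G} [N.FiniteIndex] (h : N ≤ f.ker) : (Set.range f).Finite := by
  have := Subgroup.finiteIndex_of_le h
  have : Finite f.range := Nat.finite_of_card_ne_zero
    (Subgroup.index_ker f ▸ Subgroup.FiniteIndex.index_ne_zero)
  simpa using Set.toFinite (f.range : Set M)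

attribute [local instance] Matrix.ultrametricNormedRing Matrix.isUltrametricDist
  Matrix.normSMulClass

theorem locsys_wild_inertia_finite_image_general
    (ℓ : ℕ) [Fact ℓ.Prime] (n : ℕ)
    (G : Type*) [Group G] [TopologicalSpace G] [IsTopologicalGroup G]
    [CompactSpace G] [TotallyDisconnectedSpace G]
    (hG : ∀ N : Subgroup G, N.Normal → IsOpen (N : Set G) →
      N.FiniteIndex ∧ ¬ (ℓ ∣ N.index))
    (ρ : G →* Matrix.GeneralLinearGroup (Fin n) ℚ_[ℓ])
    (hρ : Continuous ρ) :
    (Set.range ρ).Finite ∧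
      ∃ N : Subgroup G, N.Normal ∧ IsOpen (N : Set G) ∧ N.FiniteIndex ∧
        ∀ g ∈ N, ρ g = 1 := by
  obtain ⟨N, hN⟩ := ProfiniteGrp.exists_openNormalSubgroup_norm_sub_one_lt ρ hρ one_pos
  have hker : ∀ g ∈ N, ρ g = 1 := by
    intro g hg
    refine Units.ext <| sub_eq_zero.mp <| norm_le_zero_iff.mp <|
      le_of_forall_pos_lt_add fun ε hε => ?_
    obtain ⟨H, hH⟩ := ProfiniteGrp.exists_openNormalSubgroup_norm_sub_one_lt ρ hρ hε
    have hindex : ‖(H.index : ℚ_[ℓ])‖ = 1 :=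
      Padic.norm_natCast_eq_one_iff.mpr ((Nat.Prime.coprime_iff_not_dvd Fact.out).mpr
        (hG _ H.isNormal' H.isOpen').2)
    calc ‖(ρ g : Matrix (Fin n) (Fin n) ℚ_[ℓ]) - 1‖
        ≤ ‖(ρ g : Matrix (Fin n) (Fin n) ℚ_[ℓ]) ^ H.index - 1‖ :=
          IsUltrametricDist.norm_sub_one_le_norm_pow_sub_one (hN g hg) hindex
      _ < 0 + ε := by
          rw [zero_add, ← Units.val_pow_eq_pow_val, ← map_pow]
          exact hH _ (H.toSubgroup.pow_index_mem g)
  have hNfin : N.FiniteIndex := (hG _ N.isNormal' N.isOpen').1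
  exact ⟨ρ.finite_range_of_le_ker hker, N, N.isNormal', N.isOpen', hNfin, hker⟩

/-- Let ℓ be a prime, n ≥ 1, and G a profinite group all of whose open normal
subgroups have finite index not divisible by ℓ. Then every continuous homomorphism
ρ : G → GL_n(ℚ_ℓ) has finite image, and ρ factors through a finite quotient of G
(i.e. there is an open normal subgroup of finite index contained in the kernel). -/
theorem locsys_wild_inertia_finite_image
    (ℓ : ℕ) [Fact ℓ.Prime] (n : ℕ) (hn : 1 ≤ n)
    (G : Type*) [Group G] [TopologicalSpace G] [IsTopologicalGroup G]
    [CompactSpace G] [T2Space G] [TotallyDisconnectedSpace G]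
    (hG : ∀ N : Subgroup G, N.Normal → IsOpen (N : Set G) →
      N.FiniteIndex ∧ ¬ (ℓ ∣ N.index))
    (ρ : G →* Matrix.GeneralLinearGroup (Fin n) ℚ_[ℓ])
    (hρ : Continuous ρ) :
    (Set.range ρ).Finite ∧
      ∃ N : Subgroup G, N.Normal ∧ IsOpen (N : Set G) ∧ N.FiniteIndex ∧
        ∀ g ∈ N, ρ g = 1 :=
  locsys_wild_inertia_finite_image_general ℓ n G hG ρ hρ
end

section
/- Let ℓ be a prime number, n ≥ 1, let G be a compact topological group, and let ρ : G → GL_n(ℚ_ℓ) be a continuous group homomorphism. Then ρ preserves a lattice up to conjugation: there exists M ∈ GL_n(ℚ_ℓ) such that for every g ∈ G all entries of the matrix M·ρ(g)·M⁻¹ lie in ℤ_ℓ (i.e. have ℓ-adic norm at most 1), so the conjugated representation takes values in GL_n(ℤ_ℓ). -/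
/-!
Since `G` is compact, the matrices `ρ g` are bounded, so a single nonzero scalar `a` makes every
`a • ρ g` map the standard lattice `ℤ_ℓⁿ` into itself. The `ℤ_ℓ`-span `L` of all translates
`ρ g (ℤ_ℓⁿ)` is then `G`-stable, contains `ℤ_ℓⁿ` and lies in `a⁻¹ • ℤ_ℓⁿ`; as `ℤ_ℓ` is a PID,
`L` is a free lattice of rank `n`. In a `ℤ_ℓ`-basis of `L` every `ρ g` has an integral matrix,
and `M` is the change of basis to it.
-/

open Module Submodule Matrix

namespace Submodule

variable (R K : Type*) [CommRing R] [Field K] [Algebra R K] (ι : Type*)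

def standardLattice : Submodule R (ι → K) :=
  LinearMap.range ((Algebra.linearMap R K).compLeft ι)

variable {R K ι}

theorem mem_standardLattice {x : ι → K} :
    x ∈ standardLattice R K ι ↔ ∀ i, x i ∈ (algebraMap R K).range := by
  refine ⟨?_, fun hx => ⟨fun i => (hx i).choose, funext fun i => (hx i).choose_spec⟩⟩
  rintro ⟨y, rfl⟩ i
  exact ⟨y i, rfl⟩

instance [Finite ι] : IsLattice K (standardLattice R K ι) where
  fg := by
    rw [standardLattice, LinearMap.range_eq_map]
    exact Module.Finite.fg_top.map _
  span_eq_top := by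
    classical
    rw [eq_top_iff, ← (Pi.basisFun K ι).span_eq, span_le]
    rintro _ ⟨i, rfl⟩
    refine subset_span ⟨Pi.single i 1, funext fun j => ?_⟩
    by_cases h : j = i <;> simp [h]

end Submodule

section Lattice

variable {R K V : Type*} [CommRing R] [Field K] [Algebra R K]
  [AddCommGroup V] [Module K V] [Module R V] [IsScalarTower R K V]

theorem Module.Basis.extendOfIsLattice_repr [IsFractionRing R K] {κ : Type*}
    {M : Submodule R V} [IsLattice K M] (b : Basis κ R M) (x : M) (k : κ) :
    (b.extendOfIsLattice K).repr x k = algebraMap R K (b.repr x k) := by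
  classical
  have hb : (Finsupp.lapply (R := K) k).restrictScalars R ∘ₗ
      ((b.extendOfIsLattice K).repr.toLinearMap.restrictScalars R ∘ₗ M.subtype) =
      Algebra.linearMap R K ∘ₗ Finsupp.lapply k ∘ₗ b.repr.toLinearMap := by
    refine b.ext fun j => ?_
    change (b.extendOfIsLattice K).repr (b j : V) k = algebraMap R K (b.repr (b j) k)
    rw [← Basis.extendOfIsLattice_apply, Basis.repr_self, Basis.repr_self,
      Finsupp.single_apply, Finsupp.single_apply]
    split_ifs <;> simp
  exact LinearMap.congr_fun hb x

theorem Module.Basis.toMatrix_extendOfIsLattice_mem_range [IsFractionRing R K] {κ : Type*}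
    [Fintype κ] [DecidableEq κ] {M : Submodule R V} [IsLattice K M] (b : Basis κ R M)
    {f : V →ₗ[K] V} (hf : ∀ x ∈ M, f x ∈ M) (i j : κ) :
    LinearMap.toMatrix (b.extendOfIsLattice K) (b.extendOfIsLattice K) f i j ∈
      (algebraMap R K).range := by
  rw [LinearMap.toMatrix_apply, Basis.extendOfIsLattice_apply]
  exact ⟨_, (b.extendOfIsLattice_repr ⟨_, hf _ (b j).2⟩ i).symm⟩

/-- The stable lattice is the span of the orbit of `Λ`; it is finitely generated because
multiplication by `a` maps it into `Λ`. -/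
theorem exists_isLattice_forall_mem_of_smul_mem [IsNoetherianRing R] {G : Type*} [Monoid G]
    (ρ : G →* Module.End K V) {Λ : Submodule R V} [IsLattice K Λ] {a : K} (ha : a ≠ 0)
    (hρ : ∀ g, ∀ x ∈ Λ, a • ρ g x ∈ Λ) :
    ∃ L : Submodule R V, IsLattice K L ∧ ∀ g, ∀ x ∈ L, ρ g x ∈ L := by
  let L := ⨆ g, Λ.map ((ρ g).restrictScalars R)
  have hΛL : Λ ≤ L := by
    have := le_iSup (fun g => Λ.map ((ρ g).restrictScalars R)) 1
    rwa [map_one, Module.End.one_eq_id, LinearMap.restrictScalars_id, Submodule.map_id] at this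
  have hL_fg : L.FG := by
    have : L.map (DistribSMul.toLinearMap R V a) ≤ Λ := by
      rw [Submodule.map_iSup, iSup_le_iff]
      rintro g _ ⟨_, ⟨x, hx, rfl⟩, rfl⟩
      exact hρ g x hx
    exact fg_of_fg_map_injective _ (smul_right_injective V ha) (IsLattice.fg.of_le this)
  refine ⟨L, IsLattice.of_le_of_isLattice_of_fg K hΛL hL_fg, fun g x hx => ?_⟩
  have : L.map ((ρ g).restrictScalars R) ≤ L := by
    rw [Submodule.map_iSup]
    refine iSup_le fun h => ?_
    rw [← map_comp, ← LinearMap.restrictScalars_comp, ← Module.End.mul_eq_comp, ← map_mul]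
    exact le_iSup (fun g => Λ.map ((ρ g).restrictScalars R)) (g * h)
  exact this (mem_map_of_mem hx)

theorem exists_basis_forall_toMatrix_mem_range [IsDomain R] [IsPrincipalIdealRing R]
    [IsFractionRing R K] {ι : Type*} [Fintype ι] [DecidableEq ι] {G : Type*} [Monoid G]
    (ρ : G →* Module.End K (ι → K)) {Λ : Submodule R (ι → K)} [IsLattice K Λ] {a : K}
    (ha : a ≠ 0) (hρ : ∀ g, ∀ x ∈ Λ, a • ρ g x ∈ Λ) :
    ∃ B : Basis ι K (ι → K), ∀ g i j,
      LinearMap.toMatrix B B (ρ g) i j ∈ (algebraMap R K).range := by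
  obtain ⟨L, hL, hρL⟩ := exists_isLattice_forall_mem_of_smul_mem ρ ha hρ
  let b : Basis ι R L :=
    (finBasisOfFinrankEq R L (IsLattice.finrank_of_pi K L)).reindex (Fintype.equivFin ι).symm
  exact ⟨b.extendOfIsLattice K, fun g => b.toMatrix_extendOfIsLattice_mem_range (hρL g)⟩

end Lattice

namespace Matrix.GeneralLinearGroup

variable {K : Type*} [Field K] {ι : Type*} [Fintype ι] [DecidableEq ι]

theorem exists_conj_eq_toMatrix (B : Basis ι K (ι → K)) :
    ∃ M : GL ι K, ∀ A : GL ι K,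
      ((M * A * M⁻¹ : GL ι K) : Matrix ι ι K) =
        LinearMap.toMatrix B B (Matrix.toLin' (A : Matrix ι ι K)) := by
  refine ⟨⟨B.toMatrix (Pi.basisFun K ι), (Pi.basisFun K ι).toMatrix B,
    B.toMatrix_mul_toMatrix_flip _, Basis.toMatrix_mul_toMatrix_flip _ _⟩, fun A => ?_⟩
  rw [← basis_toMatrix_mul_linearMap_toMatrix_mul_basis_toMatrix (b' := Pi.basisFun K ι)
    (c' := Pi.basisFun K ι), LinearMap.toMatrix_eq_toMatrix', LinearMap.toMatrix'_toLin']
  rfl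

theorem exists_conj_mem_range_algebraMap {R : Type*} [CommRing R] [IsDomain R]
    [IsPrincipalIdealRing R] [Algebra R K] [IsFractionRing R K] {G : Type*} [Monoid G]
    (ρ : G →* GL ι K) {a : K} (ha : a ≠ 0)
    (hρ : ∀ g, ∀ x ∈ standardLattice R K ι,
      a • (ρ g : Matrix ι ι K) *ᵥ x ∈ standardLattice R K ι) :
    ∃ M : GL ι K, ∀ g i j,
      ((M * ρ g * M⁻¹ : GL ι K) : Matrix ι ι K) i j ∈ (algebraMap R K).range := by
  let ρ' : G →* Module.End K (ι → K) :=
    (toLinAlgEquiv' : Matrix ι ι K ≃ₐ[K] _).toMonoidHom.comp ((Units.coeHom _).comp ρ)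
  obtain ⟨B, hB⟩ := exists_basis_forall_toMatrix_mem_range ρ' ha hρ
  obtain ⟨M, hM⟩ := exists_conj_eq_toMatrix B
  exact ⟨M, fun g i j => hM (ρ g) ▸ hB g i j⟩

end Matrix.GeneralLinearGroup

namespace PadicInt

variable {p : ℕ} [Fact p.Prime]

theorem mem_range_algebraMap_iff {x : ℚ_[p]} :
    x ∈ (algebraMap ℤ_[p] ℚ_[p]).range ↔ ‖x‖ ≤ 1 :=
  ⟨by rintro ⟨y, rfl⟩; exact y.norm_le_one, fun hx => ⟨⟨x, hx⟩, rfl⟩⟩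

theorem mem_standardLattice_iff {ι : Type*} [Fintype ι] {x : ι → ℚ_[p]} :
    x ∈ standardLattice ℤ_[p] ℚ_[p] ι ↔ ‖x‖ ≤ 1 := by
  simp only [mem_standardLattice, mem_range_algebraMap_iff,
    pi_norm_le_iff_of_nonneg zero_le_one]

end PadicInt

attribute [local instance] Matrix.linftyOpNormedAddCommGroup in
theorem exists_smul_norm_mulVec_le_one {𝕜 : Type*} [NontriviallyNormedField 𝕜] {ι : Type*}
    [Fintype ι] {X : Type*} [TopologicalSpace X] [CompactSpace X] {A : X → Matrix ι ι 𝕜}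
    (hA : Continuous A) : ∃ a : 𝕜, a ≠ 0 ∧ ∀ x v, ‖v‖ ≤ 1 → ‖a • A x *ᵥ v‖ ≤ 1 := by
  obtain ⟨C, hC, hAC⟩ := (isCompact_range hA).isBounded.exists_pos_norm_le
  obtain ⟨a, ha, haC⟩ := NormedField.exists_norm_lt 𝕜 (inv_pos.2 hC)
  refine ⟨a, norm_pos_iff.1 ha, fun x v hv => ?_⟩
  calc ‖a • A x *ᵥ v‖ = ‖a‖ * ‖A x *ᵥ v‖ := norm_smul _ _
    _ ≤ C⁻¹ * (C * 1) := by
      gcongr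
      exact (linfty_opNorm_mulVec _ _).trans
        (mul_le_mul (hAC _ ⟨x, rfl⟩) hv (norm_nonneg _) hC.le)
    _ = 1 := by field_simp

theorem compact_group_rep_preserves_lattice_general
    (ℓ : ℕ) [Fact ℓ.Prime] (n : ℕ)
    (G : Type*) [Group G] [TopologicalSpace G] [CompactSpace G]
    (ρ : G →* Matrix.GeneralLinearGroup (Fin n) ℚ_[ℓ])
    (hρ : Continuous ρ) :
    ∃ M : Matrix.GeneralLinearGroup (Fin n) ℚ_[ℓ],
      ∀ g : G, ∀ i j : Fin n,
        ‖((M * ρ g * M⁻¹ : Matrix.GeneralLinearGroup (Fin n) ℚ_[ℓ]) :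
            Matrix (Fin n) (Fin n) ℚ_[ℓ]) i j‖ ≤ 1 := by
  obtain ⟨a, ha, hbdd⟩ := exists_smul_norm_mulVec_le_one (Units.continuous_val.comp hρ)
  obtain ⟨M, hM⟩ := GeneralLinearGroup.exists_conj_mem_range_algebraMap (R := ℤ_[ℓ]) ρ ha
    fun g x hx => by
      rw [PadicInt.mem_standardLattice_iff] at hx ⊢
      exact hbdd g x hx
  exact ⟨M, fun g i j => PadicInt.mem_range_algebraMap_iff.1 (hM g i j)⟩

/-- A continuous representation ρ : G → GL_n(ℚ_ℓ) of a compact group G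
preserves a lattice up to conjugation: there is M ∈ GL_n(ℚ_ℓ) such that all entries of
M·ρ(g)·M⁻¹ have ℓ-adic norm at most 1 (i.e. lie in ℤ_ℓ), for every g ∈ G. -/
theorem compact_group_rep_preserves_lattice
    (ℓ : ℕ) [Fact ℓ.Prime] (n : ℕ) (hn : 1 ≤ n)
    (G : Type*) [Group G] [TopologicalSpace G] [IsTopologicalGroup G] [CompactSpace G]
    (ρ : G →* Matrix.GeneralLinearGroup (Fin n) ℚ_[ℓ])
    (hρ : Continuous ρ) :
    ∃ M : Matrix.GeneralLinearGroup (Fin n) ℚ_[ℓ],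
      ∀ g : G, ∀ i j : Fin n,
        ‖((M * ρ g * M⁻¹ : Matrix.GeneralLinearGroup (Fin n) ℚ_[ℓ]) :
            Matrix (Fin n) (Fin n) ℚ_[ℓ]) i j‖ ≤ 1 :=
  compact_group_rep_preserves_lattice_general ℓ n G ρ hρ
end

section
/- Let ℓ be a prime number, n ≥ 1, and let G be a profinite group such that every open normal subgroup of G has finite index not divisible by ℓ. Let ρ : G → GL_n(ℤ_ℓ) be a continuous group homomorphism. If g ∈ G is such that ρ(g) reduces to the identity modulo ℓ (i.e. every entry of ρ(g) − I is divisible by ℓ), then ρ(g) = I. Equivalently, the image of ρ meets the congruence subgroup N₁ = ker(π : GL_n(ℤ_ℓ) → GL_n(𝔽_ℓ)) only in the identity. -/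
/-!
Write `Γ(c) ⊆ GL_n(ℤ_ℓ)` for the matrices congruent to `1` modulo `c`. If `A ∈ Γ(ℓ^k)`
with `k ≥ 1`, then `A^m ≡ 1 + m (A - 1) (mod ℓ^{2k})`, so for `m` prime to `ℓ` the power
`A^m` lies in `Γ(ℓ^{k+1})` only if `A` does. Each `Γ(ℓ^k)` is open and normal, so its
preimage under `ρ` has index `m` prime to `ℓ` and contains `g^m`. Starting from
`ρ g ∈ Γ(ℓ)`, induction on `k` puts `ρ g` in every `Γ(ℓ^k)`, whose intersection is trivial.
-/

section Ring

variable {S : Type*} [Ring S]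

theorem natCast_dvd_mul_left {c : ℕ} {b : S} (h : (c : S) ∣ b) (a : S) : (c : S) ∣ a * b := by
  obtain ⟨e, rfl⟩ := h
  exact ⟨a * e, by rw [← mul_assoc, ← mul_assoc, (Nat.cast_commute c a).eq]⟩

theorem natCast_sq_dvd_pow_sub_one_sub_mul {c : ℕ} {a : S} (h : (c : S) ∣ a - 1) (m : ℕ) :
    (c : S) ^ 2 ∣ a ^ m - 1 - m * (a - 1) := by
  induction m with
  | zero => simp
  | succ m ih =>
    have hsplit : a ^ (m + 1) - 1 - ((m + 1 : ℕ) : S) * (a - 1)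
        = (a ^ m - 1 - m * (a - 1)) + (a ^ m - 1) * (a - 1) := by
      push_cast; noncomm_ring
    obtain ⟨d, hd⟩ := h.trans (sub_one_dvd_pow_sub_one a m)
    obtain ⟨e, he⟩ := h
    have hprod : (c : S) ^ 2 ∣ (a ^ m - 1) * (a - 1) := ⟨d * e, by
      rw [hd, he, sq, mul_assoc, ← mul_assoc d, ← (Nat.cast_commute c d).eq]; noncomm_ring⟩
    rw [hsplit]
    exact dvd_add ih hprod

theorem pow_succ_dvd_sub_one_of_dvd_pow_sub_one {p k m : ℕ} {a : S} (hk : 1 ≤ k)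
    (hm : IsUnit (m : S)) (h : (p : S) ^ k ∣ a - 1) (hpow : (p : S) ^ (k + 1) ∣ a ^ m - 1) :
    (p : S) ^ (k + 1) ∣ a - 1 := by
  have hsq : (p : S) ^ (k + 1) ∣ a ^ m - 1 - m * (a - 1) := by
    have := natCast_sq_dvd_pow_sub_one_sub_mul (c := p ^ k) (a := a) (by rwa [Nat.cast_pow]) m
    rw [Nat.cast_pow, ← pow_mul] at this
    exact (pow_dvd_pow _ (by omega)).trans this
  obtain ⟨e, he⟩ : (p : S) ^ (k + 1) ∣ m * (a - 1) := by
    simpa only [sub_sub_cancel] using dvd_sub hpow hsq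
  obtain ⟨u, hu⟩ := hm
  have hcomm : Commute (↑u⁻¹ : S) ((p : S) ^ (k + 1)) := by
    have : Commute (u : S) ((p : S) ^ (k + 1)) := hu ▸ Nat.cast_commute m _
    exact this.units_inv_left
  refine ⟨↑u⁻¹ * e, ?_⟩
  rw [← mul_assoc, ← hcomm.eq, mul_assoc, ← he, ← hu, Units.inv_mul_cancel_left]

theorem pow_dvd_sub_one_of_forall_exists_pow {p : ℕ} {a : S} (h : (p : S) ∣ a - 1)
    (hpow : ∀ k, ∃ m : ℕ, IsUnit (m : S) ∧ (p : S) ^ k ∣ a ^ m - 1) (k : ℕ) :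
    (p : S) ^ k ∣ a - 1 := by
  induction k with
  | zero => simp
  | succ k ih =>
    rcases Nat.eq_zero_or_pos k with rfl | hk
    · simpa using h
    · obtain ⟨m, hm, hdvd⟩ := hpow (k + 1)
      exact pow_succ_dvd_sub_one_of_dvd_pow_sub_one hk hm ih hdvd

variable (S) in
def congruenceSubgroup (c : ℕ) : Subgroup Sˣ where
  carrier := {u | (c : S) ∣ u - 1}
  mul_mem' {u v} hu hv := by
    rw [Set.mem_ofPred_eq, Units.val_mul, show (u * v : S) - 1 = u * (v - 1) + (u - 1) by
      noncomm_ring]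
    exact dvd_add (natCast_dvd_mul_left hv _) hu
  one_mem' := by simp
  inv_mem' {u} hu := by
    rw [Set.mem_ofPred_eq, show (↑u⁻¹ : S) - 1 = -(↑u⁻¹ * (u - 1)) by
      rw [mul_sub, Units.inv_mul, mul_one]; abel]
    exact (natCast_dvd_mul_left hu _).neg_right

theorem mem_congruenceSubgroup {c : ℕ} {u : Sˣ} :
    u ∈ congruenceSubgroup S c ↔ (c : S) ∣ u - 1 := Iff.rfl

instance (c : ℕ) : (congruenceSubgroup S c).Normal where
  conj_mem u hu g := by
    rw [mem_congruenceSubgroup, show (↑(g * u * g⁻¹) : S) - 1 = g * ((u - 1) * ↑g⁻¹) by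
      simp only [Units.val_mul, sub_mul, mul_sub, Units.mul_inv, one_mul, mul_assoc]]
    exact natCast_dvd_mul_left (hu.mul_right _) _

end Ring

theorem exists_pow_mem_of_isOpen {ℓ : ℕ} {G K : Type*} [Group G] [TopologicalSpace G] [Group K]
    [TopologicalSpace K]
    (hG : ∀ N : Subgroup G, N.Normal → IsOpen (N : Set G) → ¬ ℓ ∣ N.index)
    {ρ : G →* K} (hρ : Continuous ρ) {H : Subgroup K} [H.Normal] (hH : IsOpen (H : Set K))
    (g : G) : ∃ m, ¬ ℓ ∣ m ∧ ρ g ^ m ∈ H := by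
  refine ⟨_, hG (H.comap ρ) inferInstance (hH.preimage hρ), ?_⟩
  simpa using (H.comap ρ).pow_index_mem g

theorem Matrix.scalar_dvd_iff {R n : Type*} [Semiring R] [Fintype n] [DecidableEq n] {r : R}
    {M : Matrix n n R} : scalar n r ∣ M ↔ ∀ i j, r ∣ M i j := by
  refine ⟨fun ⟨B, hB⟩ i j ↦ ⟨B i j, by simp [hB]⟩, fun h ↦ ?_⟩
  choose B hB using h
  exact ⟨Matrix.of B, by ext i j; simp [hB]⟩

theorem Matrix.natCast_dvd_iff {R n : Type*} [Semiring R] [Fintype n] [DecidableEq n] {c : ℕ}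
    {M : Matrix n n R} : (c : Matrix n n R) ∣ M ↔ ∀ i j, (c : R) ∣ M i j := by
  rw [← map_natCast (scalar n), scalar_dvd_iff]

namespace PadicInt

variable {p : ℕ} [Fact p.Prime]

theorem isUnit_natCast_iff {m : ℕ} : IsUnit (m : ℤ_[p]) ↔ ¬ p ∣ m := by
  rw [isUnit_iff, norm_natCast_eq_one_iff, Nat.Prime.coprime_iff_not_dvd Fact.out]

theorem eq_zero_of_forall_pow_dvd {z : ℤ_[p]} (h : ∀ k, (p : ℤ_[p]) ^ k ∣ z) : z = 0 := by
  by_contra hz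
  have := (mem_span_pow_iff_le_valuation z hz (z.valuation + 1)).1
    (Ideal.mem_span_singleton.2 (h _))
  omega

variable (p) in
theorem isOpen_setOf_pow_dvd (k : ℕ) : IsOpen {z : ℤ_[p] | (p : ℤ_[p]) ^ k ∣ z} := by
  convert IsUltrametricDist.isOpen_closedBall (0 : ℤ_[p]) (r := (p : ℝ) ^ (-k : ℤ))
    (zpow_ne_zero _ (Nat.cast_ne_zero.2 (Fact.out : p.Prime).ne_zero)) using 1
  ext z
  rw [Set.mem_ofPred_eq, Metric.mem_closedBall, dist_zero_right, norm_le_pow_iff_mem_span_pow,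
    Ideal.mem_span_singleton]

variable (p) in
theorem isOpen_congruenceSubgroup (n : Type*) [Fintype n] [DecidableEq n] (k : ℕ) :
    IsOpen (congruenceSubgroup (Matrix n n ℤ_[p]) (p ^ k) : Set (GL n ℤ_[p])) := by
  have hset : (congruenceSubgroup (Matrix n n ℤ_[p]) (p ^ k) : Set (GL n ℤ_[p])) =
      (fun u : GL n ℤ_[p] ↦ (u : Matrix n n ℤ_[p]) - 1) ⁻¹'
        ⋂ i, ⋂ j, (fun M : Matrix n n ℤ_[p] ↦ M i j) ⁻¹' {z | (p : ℤ_[p]) ^ k ∣ z} := by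
    ext u
    rw [SetLike.mem_coe, mem_congruenceSubgroup, Matrix.natCast_dvd_iff]
    simp
  rw [hset]
  refine IsOpen.preimage (Units.continuous_val.sub continuous_const) ?_
  exact isOpen_iInter_of_finite fun i ↦ isOpen_iInter_of_finite fun j ↦
    (isOpen_setOf_pow_dvd p k).preimage (continuous_id.matrix_elem i j)

end PadicInt

theorem image_meets_congruence_subgroup_trivially_general
    (ℓ : ℕ) [Fact ℓ.Prime] (n : ℕ)
    (G : Type*) [Group G] [TopologicalSpace G]
    (hG : ∀ N : Subgroup G, N.Normal → IsOpen (N : Set G) →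
      N.FiniteIndex ∧ ¬ (ℓ ∣ N.index))
    (ρ : G →* Matrix.GeneralLinearGroup (Fin n) ℤ_[ℓ])
    (hρ : Continuous ρ)
    (g : G)
    (hg : ∀ i j : Fin n,
      (ℓ : ℤ_[ℓ]) ∣ (((ρ g : Matrix (Fin n) (Fin n) ℤ_[ℓ]) -
        (1 : Matrix (Fin n) (Fin n) ℤ_[ℓ])) i j)) :
    ρ g = 1 := by
  have hpow : ∀ k, ∃ m : ℕ, IsUnit (m : Matrix (Fin n) (Fin n) ℤ_[ℓ]) ∧
      (ℓ : Matrix (Fin n) (Fin n) ℤ_[ℓ]) ^ k ∣ (ρ g : Matrix (Fin n) (Fin n) ℤ_[ℓ]) ^ m - 1 := by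
    intro k
    obtain ⟨m, hm, hmem⟩ := exists_pow_mem_of_isOpen (fun N hN hO ↦ (hG N hN hO).2) hρ
      (PadicInt.isOpen_congruenceSubgroup ℓ (Fin n) k) g
    refine ⟨m, ?_, by simpa [mem_congruenceSubgroup] using hmem⟩
    simpa using (PadicInt.isUnit_natCast_iff.2 hm).map (Matrix.scalar (Fin n))
  have hdvd : ∀ k, ((ℓ ^ k : ℕ) : Matrix (Fin n) (Fin n) ℤ_[ℓ]) ∣ ρ g - 1 := fun k ↦ by
    simpa using pow_dvd_sub_one_of_forall_exists_pow (Matrix.natCast_dvd_iff.2 hg) hpow k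
  refine Units.ext (sub_eq_zero.1 (Matrix.ext fun i j ↦ ?_))
  exact PadicInt.eq_zero_of_forall_pow_dvd fun k ↦
    by simpa using Matrix.natCast_dvd_iff.1 (hdvd k) i j

/-- Let G be a profinite group all of whose open normal subgroups have finite
index prime to ℓ, and ρ : G → GL_n(ℤ_ℓ) a continuous homomorphism. If ρ(g) is congruent
to the identity mod ℓ then ρ(g) = 1; i.e. the image of ρ meets the congruence subgroup
N₁ = ker(GL_n(ℤ_ℓ) → GL_n(𝔽_ℓ)) only in the identity. -/
theorem image_meets_congruence_subgroup_trivially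
    (ℓ : ℕ) [Fact ℓ.Prime] (n : ℕ) (hn : 1 ≤ n)
    (G : Type*) [Group G] [TopologicalSpace G] [IsTopologicalGroup G]
    [CompactSpace G] [T2Space G] [TotallyDisconnectedSpace G]
    (hG : ∀ N : Subgroup G, N.Normal → IsOpen (N : Set G) →
      N.FiniteIndex ∧ ¬ (ℓ ∣ N.index))
    (ρ : G →* Matrix.GeneralLinearGroup (Fin n) ℤ_[ℓ])
    (hρ : Continuous ρ)
    (g : G)
    (hg : ∀ i j : Fin n,
      (ℓ : ℤ_[ℓ]) ∣ (((ρ g : Matrix (Fin n) (Fin n) ℤ_[ℓ]) -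
        (1 : Matrix (Fin n) (Fin n) ℤ_[ℓ])) i j)) :
    ρ g = 1 :=
  image_meets_congruence_subgroup_trivially_general ℓ n G hG ρ hρ g hg
end

section
/- Let k be an algebraically closed field of characteristic p > 0 and let n ≥ 1 be an integer. Equip k[X] with the algebra structure over (a second copy of) k[X] via the k-algebra homomorphism sending X to X^{p^n} − X. Then every automorphism of this algebra (i.e. every k[X]-algebra automorphism of k[X]) is of the form X ↦ X + a for a unique a ∈ k with a^{p^n} = a, and the group of such automorphisms is isomorphic to the additive group (ℤ/pℤ)^n. -/
/-!
An automorphism `σ` of `k[X]` over `k[X]`, acting through `X ↦ P`, fixes the constants, so it is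
the substitution `X ↦ σ X`; surjectivity forces `σ X` to have degree one. For
`P = X ^ p ^ n - X` we have `P' = -1` and `(g ^ p ^ n)' = 0`, so differentiating `σ P = P` gives
`σ X = X + b`, and this substitution fixes `P` exactly when `b ^ p ^ n = b`. Hence the group is
the additive group of roots of `P`, which has `p ^ n` elements because `P` is separable and `k`
is algebraically closed, and is therefore an `𝔽_p`-vector space of dimension `n`.
-/

open Polynomial

theorem ZMod.nonempty_linearEquiv_fin_pi_of_natCard_eq {p : ℕ} [Fact p.Prime] {V : Type*}
    [AddCommGroup V] [Module (ZMod p) V] {n : ℕ} (hcard : Nat.card V = p ^ n) :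
    Nonempty (V ≃ₗ[ZMod p] (Fin n → ZMod p)) := by
  have : Finite V := Nat.finite_of_card_ne_zero (by simp [hcard, (Fact.out : p.Prime).ne_zero])
  have hrank : Module.finrank (ZMod p) V = n := by
    rw [← FiniteField.pow_finrank_eq_natCard p V] at hcard
    exact Nat.pow_right_injective (Fact.out : p.Prime).two_le hcard
  exact FiniteDimensional.nonempty_linearEquiv_of_finrank_eq
    (by rw [hrank, Module.finrank_fin_fun])

namespace Polynomial

section CommRing

variable {R : Type*} [CommRing R]

/- Not an instance, as it would clash with `Algebra.id`: proofs about `DeckGroup P` install it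
locally. -/
noncomputable abbrev substAlgebra (P : R[X]) : Algebra R[X] R[X] := (aeval P).toRingHom.toAlgebra

/-- The automorphism group of the covering `𝔸¹ → 𝔸¹, x ↦ P x`. -/
abbrev DeckGroup (P : R[X]) : Type _ :=
  @AlgEquiv R[X] R[X] R[X] _ _ _ (substAlgebra P) (substAlgebra P)

def periods (P : R[X]) : AddSubgroup R where
  carrier := {b | taylor b P = P}
  add_mem' {b c} hb hc := by
    change taylor (b + c) P = P
    rw [← taylor_taylor, hc, hb]
  zero_mem' := taylor_zero P
  neg_mem' {b} hb := by
    change taylor (-b) P = P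
    nth_rw 1 [← hb]
    rw [taylor_taylor, neg_add_cancel, taylor_zero]

theorem mem_periods {P : R[X]} {b : R} : b ∈ periods P ↔ taylor b P = P := Iff.rfl

namespace DeckGroup

variable {P : R[X]}

theorem map_C (σ : DeckGroup P) (c : R) : σ (C c) = C c := by
  let := substAlgebra P
  simpa only [RingHom.algebraMap_toAlgebra, AlgHom.toRingHom_eq_coe, RingHom.coe_coe, aeval_C,
    algebraMap_eq] using σ.commutes (C c)

theorem map_self (σ : DeckGroup P) : σ P = P := by
  let := substAlgebra P
  simpa only [RingHom.algebraMap_toAlgebra, AlgHom.toRingHom_eq_coe, RingHom.coe_coe, aeval_X]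
    using σ.commutes X

theorem apply_eq_comp (σ : DeckGroup P) (q : R[X]) : σ q = q.comp (σ X) := by
  have hC : (σ : R[X] →+* R[X]).comp C = C := RingHom.ext σ.map_C
  calc σ q = σ (q.eval₂ C X) := by rw [eval₂_C_X]
    _ = q.eval₂ ((σ : R[X] →+* R[X]).comp C) (σ X) := hom_eval₂ q C (σ : R[X] →+* R[X]) X
    _ = q.comp (σ X) := by rw [hC]; rfl

theorem ext_X {σ τ : DeckGroup P} (h : σ X = τ X) : σ = τ := by
  let := substAlgebra P
  exact AlgEquiv.ext fun q => by rw [apply_eq_comp σ, apply_eq_comp τ, h]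

theorem natDegree_apply_X [IsDomain R] (σ : DeckGroup P) : (σ X).natDegree = 1 := by
  let := substAlgebra P
  obtain ⟨q, hq⟩ := σ.surjective X
  have hcomp : q.comp (σ X) = X := by rw [← apply_eq_comp, hq]
  have := congrArg natDegree hcomp
  rw [natDegree_comp, natDegree_X] at this
  exact Nat.eq_one_of_mul_eq_one_left this

noncomputable def translation (b : periods P) : DeckGroup P :=
  let := substAlgebra P
  AlgEquiv.ofRingEquiv (f := (taylorEquiv (b : R)).toRingEquiv) fun q => by
    show taylor (b : R) (q.comp P) = q.comp P
    rw [taylor_apply, comp_assoc, ← taylor_apply, mem_periods.1 b.2]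

theorem translation_apply_X (b : periods P) : translation b X = X + C (b : R) := taylor_X _

variable (P) in
noncomputable def translationHom : Multiplicative (periods P) →* DeckGroup P where
  toFun b := translation b.toAdd
  map_one' := ext_X (by simp [translation_apply_X])
  map_mul' b c := ext_X <| by
    let := substAlgebra P
    simp only [toAdd_mul, AlgEquiv.mul_apply, translation_apply_X, map_add, map_C,
      AddSubgroup.coe_add]
    ring

theorem translationHom_apply_X (b : Multiplicative (periods P)) :
    translationHom P b X = X + C (b.toAdd : R) := translation_apply_X _

theorem translationHom_injective : Function.Injective (translationHom P) := fun b c h => by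
  have := congrArg (· X) h
  simp only [translationHom_apply_X, add_right_inj, C_inj] at this
  exact Multiplicative.toAdd.injective (Subtype.ext this)

theorem exists_translationHom_eq {σ : DeckGroup P} {b : R} (h : σ X = X + C b) :
    ∃ c, translationHom P c = σ := by
  have hb : b ∈ periods P := by rw [mem_periods, taylor_apply, ← h, ← apply_eq_comp, map_self]
  exact ⟨Multiplicative.ofAdd ⟨b, hb⟩, ext_X (by rw [translationHom_apply_X, h]; rfl)⟩

end DeckGroup

end CommRing

section ArtinSchreier

variable {R : Type*} [CommRing R] {p : ℕ}

theorem taylor_X_pow_expChar_pow_sub_X [ExpChar R p] (n : ℕ) (b : R) :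
    taylor b (X ^ p ^ n - X : R[X]) = X ^ p ^ n - X + C (b ^ p ^ n - b) := by
  rw [taylor_apply, sub_comp, pow_comp, X_comp, add_pow_expChar_pow, C_sub, C_pow]
  ring

theorem mem_periods_X_pow_expChar_pow_sub_X [ExpChar R p] {n : ℕ} {b : R} :
    b ∈ periods (X ^ p ^ n - X : R[X]) ↔ b ^ p ^ n = b := by
  rw [mem_periods, taylor_X_pow_expChar_pow_sub_X, add_eq_left, C_eq_zero, sub_eq_zero]

theorem derivative_pow_char_pow [Fact p.Prime] [CharP R p] {n : ℕ} (hn : n ≠ 0) (g : R[X]) :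
    derivative (g ^ p ^ n) = 0 := by
  rw [derivative_pow, (CharP.cast_eq_zero_iff R p _).2 (dvd_pow_self p hn), C_0, zero_mul,
    zero_mul]

namespace DeckGroup

theorem exists_apply_X_eq_X_add_C [IsDomain R] [Fact p.Prime] [CharP R p] {n : ℕ} (hn : n ≠ 0)
    (σ : DeckGroup (X ^ p ^ n - X : R[X])) : ∃ b, σ X = X + C b := by
  obtain ⟨a, b, hab⟩ : ∃ a b, σ X = C a * X + C b :=
    ⟨_, _, eq_X_add_C_of_natDegree_le_one (natDegree_apply_X σ).le⟩
  have hderiv := congrArg derivative σ.map_self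
  rw [map_sub, map_pow, derivative_sub, derivative_sub, derivative_pow_char_pow hn,
    derivative_pow_char_pow hn, hab] at hderiv
  simp only [derivative_add, derivative_mul, derivative_C, zero_mul, derivative_X, mul_one,
    zero_add, add_zero, zero_sub, neg_inj] at hderiv
  exact ⟨b, by rw [hab, hderiv, one_mul]⟩

theorem translationHom_bijective_X_pow_char_pow_sub_X [IsDomain R] [Fact p.Prime] [CharP R p]
    {n : ℕ} (hn : n ≠ 0) : Function.Bijective (translationHom (X ^ p ^ n - X : R[X])) :=
  ⟨translationHom_injective, fun σ =>
    (exists_apply_X_eq_X_add_C hn σ).elim fun _ hb => exists_translationHom_eq hb⟩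

end DeckGroup

theorem natCard_periods_X_pow_char_pow_sub_X {k : Type*} [Field k] [IsAlgClosed k]
    [Fact p.Prime] [CharP k p] {n : ℕ} (hn : n ≠ 0) :
    Nat.card (periods (X ^ p ^ n - X : k[X])) = p ^ n := by
  have hp := (Fact.out : p.Prime).one_lt
  have hroots : (periods (X ^ p ^ n - X : k[X]) : Set k) = (X ^ p ^ n - X : k[X]).rootSet k := by
    ext b
    simp [mem_periods_X_pow_expChar_pow_sub_X, mem_rootSet,
      FiniteField.X_pow_card_pow_sub_X_ne_zero k hn hp, sub_eq_zero]
  calc Nat.card (periods (X ^ p ^ n - X : k[X]))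
      = Nat.card ((X ^ p ^ n - X : k[X]).rootSet k) := by rw [← hroots]; rfl
    _ = (X ^ p ^ n - X : k[X]).natDegree :=
      (Nat.card_eq_fintype_card).trans <| card_rootSet_eq_natDegree
        (galois_poly_separable p _ (dvd_pow_self p hn)) (IsAlgClosed.splits _)
    _ = p ^ n := FiniteField.X_pow_card_pow_sub_X_natDegree_eq k hn hp

theorem nonempty_addEquiv_periods_X_pow_char_pow_sub_X {k : Type*} [Field k] [IsAlgClosed k]
    [Fact p.Prime] [CharP k p] {n : ℕ} (hn : n ≠ 0) :
    Nonempty (periods (X ^ p ^ n - X : k[X]) ≃+ (Fin n → ZMod p)) := by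
  have hchar : ∀ b : periods (X ^ p ^ n - X : k[X]), p • b = 0 := fun b =>
    Subtype.ext <| by simp [nsmul_eq_mul]
  let := AddCommGroup.zmodModule hchar
  exact (ZMod.nonempty_linearEquiv_fin_pi_of_natCard_eq
    (natCard_periods_X_pow_char_pow_sub_X hn)).map LinearEquiv.toAddEquiv

end ArtinSchreier

end Polynomial

/-- Equip k[X] with the k[X]-algebra structure given by X ↦ X^{p^n} − X,
k algebraically closed of characteristic p > 0. Every k[X]-algebra automorphism of k[X]
is of the form X ↦ X + a for a unique a ∈ k with a^{p^n} = a, and the group of these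
automorphisms is isomorphic to the additive group (ℤ/pℤ)^n. -/
theorem artin_schreier_deck_group
    (k : Type) [Field k] [IsAlgClosed k] (p : ℕ) [Fact p.Prime] [CharP k p]
    (n : ℕ) (hn : 1 ≤ n) :
    let f : Polynomial k →+* Polynomial k :=
      (Polynomial.aeval (Polynomial.X ^ p ^ n - Polynomial.X : Polynomial k)).toRingHom
    (∀ σ : @AlgEquiv (Polynomial k) (Polynomial k) (Polynomial k) _ _ _
        f.toAlgebra f.toAlgebra,
      ∃! a : k, a ^ p ^ n = a ∧
        σ (Polynomial.X : Polynomial k) = Polynomial.X + Polynomial.C a) ∧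
    Nonempty
      ((@AlgEquiv (Polynomial k) (Polynomial k) (Polynomial k) _ _ _
          f.toAlgebra f.toAlgebra) ≃* Multiplicative (Fin n → ZMod p)) := by
  intro f
  have hn0 : n ≠ 0 := Nat.one_le_iff_ne_zero.mp hn
  have hbij := DeckGroup.translationHom_bijective_X_pow_char_pow_sub_X (R := k) hn0
  obtain ⟨e⟩ := nonempty_addEquiv_periods_X_pow_char_pow_sub_X (k := k) hn0
  refine ⟨fun σ => ?_, ⟨(MulEquiv.ofBijective _ hbij).symm.trans e.toMultiplicative⟩⟩
  obtain ⟨b, rfl⟩ := hbij.2 σ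
  refine ⟨b.toAdd, ⟨mem_periods_X_pow_expChar_pow_sub_X.1 b.toAdd.2,
    DeckGroup.translationHom_apply_X b⟩, fun a ⟨_, ha⟩ => ?_⟩
  exact C_injective (add_left_cancel (ha.symm.trans (DeckGroup.translationHom_apply_X b)))
end
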